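/- Let 0 < p ≤ 1, m, s < N, A ∈ R^{m×N}, and Δ : R^m → R^N. Suppose ||x - Δ(Ax)||_p^p ≤ C σ_s(x)_p^p for all x ∈ R^N and some constant C > 0. Then m ≥ C' p s ln(eN/s), where C' > 0 depends only on C. -/

import Mathlib

/-- The ℓp (quasi-)norm on ℝ^N: `(∑ |x ℓ|^p)^(1/p)`. -/
noncomputable def pnorm (p : ℝ) {N : ℕ} (x : Fin N → ℝ) : ℝ :=
  (∑ i, |x i| ^ p) ^ (1 / p)

/-- A vector is `s`-sparse if at most `s` of its coordinates are nonzero. -/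
def IsSparse (s : ℕ) {N : ℕ} (z : Fin N → ℝ) : Prop :=
  ∃ S : Finset (Fin N), S.card ≤ s ∧ ∀ i ∉ S, z i = 0

/-- The error of best `s`-term approximation of `x` in `ℓ_p`. -/
noncomputable def bestApprox (s : ℕ) (p : ℝ) {N : ℕ} (x : Fin N → ℝ) : ℝ :=
  sInf {r | ∃ z : Fin N → ℝ, IsSparse s z ∧ r = pnorm p (x - z)}

/-! Stability forces exact recovery of `s`-sparse vectors, hence `s ≤ m`, and it keeps the
indicators of two `s`-sets overlapping in fewer than `s / 2` points apart under `A` even after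
perturbations of `ℓ_p^p`-size `s / (3 (C + 1))`. A maximal family of such sets has at least
`(N / 4s) ^ ⌈s / 2⌉` members, while comparing volumes of the perturbed images in the range of
`A`, of dimension at most `m`, bounds it by `(3C + 4) ^ (m / p)`. Taking logarithms gives the claim
when `N ≥ e⁹ s`; otherwise it follows from `s ≤ m`. -/

open Finset Matrix
open scoped symmDiff

noncomputable def pnormPow (p : ℝ) {N : ℕ} (x : Fin N → ℝ) : ℝ := ∑ i, |x i| ^ p

section PnormPow
variable {p : ℝ} {N : ℕ}

lemma pnormPow_nonneg (x : Fin N → ℝ) : 0 ≤ pnormPow p x :=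
  sum_nonneg fun _ _ => Real.rpow_nonneg (abs_nonneg _) _

lemma pnorm_rpow (hp : 0 < p) (x : Fin N → ℝ) : pnorm p x ^ p = pnormPow p x := by
  rw [pnorm, ← pnormPow, ← Real.rpow_mul (pnormPow_nonneg x), one_div_mul_cancel hp.ne',
    Real.rpow_one]

lemma pnormPow_eq_zero_iff (hp : 0 < p) {x : Fin N → ℝ} : pnormPow p x = 0 ↔ x = 0 := by
  simp [pnormPow, sum_eq_zero_iff_of_nonneg, Real.rpow_nonneg, hp.ne', funext_iff]

lemma pnormPow_neg (x : Fin N → ℝ) : pnormPow p (-x) = pnormPow p x := by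
  simp [pnormPow]

lemma pnormPow_sub_comm (x y : Fin N → ℝ) : pnormPow p (x - y) = pnormPow p (y - x) := by
  rw [← neg_sub, pnormPow_neg]

lemma pnormPow_smul {c : ℝ} (hc : 0 ≤ c) (x : Fin N → ℝ) :
    pnormPow p (c • x) = c ^ p * pnormPow p x := by
  simp only [pnormPow, mul_sum, Pi.smul_apply, smul_eq_mul, abs_mul, abs_of_nonneg hc,
    Real.mul_rpow hc (abs_nonneg _)]

lemma pnormPow_add_le (hp : 0 < p) (hp1 : p ≤ 1) (x y : Fin N → ℝ) :
    pnormPow p (x + y) ≤ pnormPow p x + pnormPow p y := by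
  rw [pnormPow, pnormPow, pnormPow, ← sum_add_distrib]
  gcongr with i
  calc |(x + y) i| ^ p ≤ (|x i| + |y i|) ^ p := by gcongr; exact abs_add_le _ _
    _ ≤ |x i| ^ p + |y i| ^ p :=
      Real.rpow_add_le_add_rpow (abs_nonneg _) (abs_nonneg _) hp.le hp1

lemma pnormPow_indicator_sub (hp : 0 < p) (T T' : Finset (Fin N)) :
    pnormPow p ((T : Set (Fin N)).indicator 1 - (T' : Set (Fin N)).indicator 1) = #(T ∆ T') := by
  have hterm (i : Fin N) :
      |(T : Set (Fin N)).indicator (1 : Fin N → ℝ) i - (T' : Set (Fin N)).indicator 1 i| ^ p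
        = if i ∈ T ∆ T' then 1 else 0 := by
    by_cases i ∈ T <;> by_cases i ∈ T' <;> simp [*, hp.ne', mem_symmDiff]
  simp [pnormPow, hterm]

lemma pnormPow_indicator (hp : 0 < p) (T : Finset (Fin N)) :
    pnormPow p ((T : Set (Fin N)).indicator 1) = #T := by
  have h := pnormPow_indicator_sub hp T ∅
  rwa [coe_empty, Set.indicator_empty', sub_zero, ← bot_eq_empty, symmDiff_bot] at h

end PnormPow

section BestApprox
variable {p : ℝ} {N s : ℕ}

lemma isSparse_zero : IsSparse s (0 : Fin N → ℝ) := ⟨∅, by simp, by simp⟩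

lemma isSparse_indicator {T : Finset (Fin N)} (hT : #T ≤ s) :
    IsSparse s ((T : Set (Fin N)).indicator 1) :=
  ⟨T, hT, fun _ hi => Set.indicator_of_notMem (by simpa using hi) _⟩

lemma bestApprox_le_pnorm {z : Fin N → ℝ} (hz : IsSparse s z) (x : Fin N → ℝ) :
    bestApprox s p x ≤ pnorm p (x - z) := by
  refine csInf_le ⟨0, ?_⟩ ⟨z, hz, rfl⟩
  rintro r ⟨w, -, rfl⟩
  exact Real.rpow_nonneg (pnormPow_nonneg _) _

lemma bestApprox_nonneg (x : Fin N → ℝ) : 0 ≤ bestApprox s p x := by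
  refine le_csInf ⟨_, 0, isSparse_zero, rfl⟩ ?_
  rintro r ⟨w, -, rfl⟩
  exact Real.rpow_nonneg (pnormPow_nonneg _) _

end BestApprox

def IsStable (p C : ℝ) (s : ℕ) {m N : ℕ} (A : Matrix (Fin m) (Fin N) ℝ)
    (Δ : (Fin m → ℝ) → Fin N → ℝ) : Prop :=
  ∀ x, pnorm p (x - Δ (A *ᵥ x)) ^ p ≤ C * bestApprox s p x ^ p

namespace IsStable
variable {p C : ℝ} {m N s : ℕ} {A : Matrix (Fin m) (Fin N) ℝ} {Δ : (Fin m → ℝ) → Fin N → ℝ}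

lemma pnormPow_sub_decode_le (h : IsStable p C s A Δ) (hp : 0 < p) (hC : 0 ≤ C)
    (x : Fin N → ℝ) {z : Fin N → ℝ} (hz : IsSparse s z) :
    pnormPow p (x - Δ (A *ᵥ x)) ≤ C * pnormPow p (x - z) := by
  rw [← pnorm_rpow hp, ← pnorm_rpow hp]
  exact (h x).trans (by gcongr; exacts [bestApprox_nonneg x, bestApprox_le_pnorm hz x])

lemma decode_eq (h : IsStable p C s A Δ) (hp : 0 < p) (hC : 0 ≤ C) {z : Fin N → ℝ}
    (hz : IsSparse s z) : Δ (A *ᵥ z) = z := by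
  have hle := h.pnormPow_sub_decode_le hp hC z hz
  rw [sub_self, (pnormPow_eq_zero_iff hp).2 rfl, mul_zero] at hle
  exact (sub_eq_zero.1 <| (pnormPow_eq_zero_iff hp).1 <| hle.antisymm (pnormPow_nonneg _)).symm

lemma pnormPow_sub_le_of_mulVec_eq (h : IsStable p C s A Δ) (hp : 0 < p) (hp1 : p ≤ 1)
    (hC : 0 ≤ C) {z z' v : Fin N → ℝ} (hz : IsSparse s z) (hz' : IsSparse s z')
    (hv : A *ᵥ z = A *ᵥ (z' + v)) :
    pnormPow p (z - z') ≤ (C + 1) * pnormPow p v := by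
  have hdecode : Δ (A *ᵥ (z' + v)) = z := hv ▸ h.decode_eq hp hC hz
  have hstab := h.pnormPow_sub_decode_le hp hC (z' + v) hz'
  rw [hdecode, add_sub_cancel_left, pnormPow_sub_comm] at hstab
  calc pnormPow p (z - z') = pnormPow p ((z - (z' + v)) + v) := by congr 1; abel
    _ ≤ pnormPow p (z - (z' + v)) + pnormPow p v := pnormPow_add_le hp hp1 _ _
    _ ≤ (C + 1) * pnormPow p v := by linarith

lemma mulVec_injOn_sparse (h : IsStable p C s A Δ) (hp : 0 < p) (hp1 : p ≤ 1) (hC : 0 ≤ C)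
    {z z' : Fin N → ℝ} (hz : IsSparse s z) (hz' : IsSparse s z') (hA : A *ᵥ z = A *ᵥ z') :
    z = z' := by
  have hle := h.pnormPow_sub_le_of_mulVec_eq hp hp1 hC hz hz' (v := 0) (by rwa [add_zero])
  rw [(pnormPow_eq_zero_iff hp).2 rfl, mul_zero] at hle
  exact sub_eq_zero.1 <| (pnormPow_eq_zero_iff hp).1 <| hle.antisymm (pnormPow_nonneg _)

end IsStable

lemma le_of_mulVec_injOn_sparse {m N s : ℕ} {A : Matrix (Fin m) (Fin N) ℝ} (hsN : s ≤ N)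
    (hA : ∀ z z' : Fin N → ℝ, IsSparse s z → IsSparse s z' → A *ᵥ z = A *ᵥ z' → z = z') :
    s ≤ m := by
  let E := Function.ExtendByZero.linearMap ℝ (Fin.castLE hsN)
  have hE_sparse (v : Fin s → ℝ) : IsSparse s (E v) := by
    refine ⟨univ.map (Fin.castLEEmb hsN), by simp, fun i hi => ?_⟩
    simp only [E, Function.ExtendByZero.linearMap_apply]
    rw [Function.extend_apply' _ _ _ fun ⟨j, hj⟩ => hi (by simp [← hj])]
    rfl
  have hinj : Function.Injective (A.mulVecLin ∘ₗ E) := fun v w hvw =>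
    (Function.extend_injective (Fin.castLE_injective hsN) 0)
      (hA _ _ (hE_sparse v) (hE_sparse w) hvw)
  simpa using LinearMap.finrank_le_finrank_of_injective hinj

lemma Finset.exists_maximal_pairwise_not_rel {α : Type*} [DecidableEq α] (X : Finset α)
    (r : α → α → Prop) [DecidableRel r] (hrefl : ∀ a ∈ X, r a a)
    (hsymm : ∀ a b, r a b → r b a) :
    ∃ F ⊆ X, (∀ a ∈ F, ∀ b ∈ F, a ≠ b → ¬ r a b) ∧ ∀ x ∈ X, ∃ a ∈ F, r a x := by
  let good := X.powerset.filter fun F => ∀ a ∈ F, ∀ b ∈ F, a ≠ b → ¬ r a b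
  obtain ⟨F, hF, hFmax⟩ := good.exists_max_image card ⟨∅, by simp [good]⟩
  simp only [good, mem_filter, mem_powerset] at hF hFmax
  refine ⟨F, hF.1, hF.2, fun x hx => ?_⟩
  by_contra! hfar
  have hxF : x ∉ F := fun hxF => hfar x hxF (hrefl x hx)
  have hins := hFmax (insert x F) ⟨insert_subset hx hF.1, ?_⟩
  · rw [card_insert_of_notMem hxF] at hins
    omega
  simp only [mem_insert]
  rintro a (rfl | ha) b (rfl | hb) hab
  · exact absurd rfl hab
  · exact fun h => hfar b hb (hsymm _ _ h)
  · exact hfar a ha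
  · exact hF.2 a ha b hb hab

lemma card_filter_le_card_inter_le {α : Type*} [Fintype α] [DecidableEq α] {s k : ℕ}
    {T : Finset α} (hT : #T = s) :
    #((powersetCard s univ).filter fun T' => k ≤ #(T ∩ T'))
      ≤ s.choose k * (Fintype.card α - k).choose (s - k) := by
  have hsub : (powersetCard s univ).filter (fun T' => k ≤ #(T ∩ T')) ⊆
      (powersetCard k T).biUnion fun S => (powersetCard (s - k) Sᶜ).image (· ∪ S) := by
    intro T' hT'
    rw [mem_filter, mem_powersetCard] at hT'
    obtain ⟨S, hS, hSk⟩ := exists_subset_card_eq hT'.2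
    have hST' : S ⊆ T' := hS.trans inter_subset_right
    refine mem_biUnion.2 ⟨S, mem_powersetCard.2 ⟨hS.trans inter_subset_left, hSk⟩,
      mem_image.2 ⟨T' \ S, mem_powersetCard.2 ⟨?_, ?_⟩, sdiff_union_of_subset hST'⟩⟩
    · exact subset_compl_iff_disjoint_right.2 sdiff_disjoint
    · rw [card_sdiff_of_subset hST', hT'.1.2, hSk]
  calc _ ≤ _ := card_le_card hsub
    _ ≤ #(powersetCard k T) * (Fintype.card α - k).choose (s - k) := by
      refine card_biUnion_le_card_mul _ _ _ fun S hS => card_image_le.trans_eq ?_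
      rw [card_powersetCard, card_compl, (mem_powersetCard.1 hS).2]
    _ = _ := by rw [card_powersetCard, hT]

lemma Nat.pow_mul_descFactorial_le {n N : ℕ} (h : n ≤ N) (k : ℕ) :
    N ^ k * n.descFactorial k ≤ n ^ k * N.descFactorial k := by
  induction k with
  | zero => simp
  | succ k ih =>
    have hstep : N * (n - k) ≤ n * (N - k) := by
      rcases le_total n k with hnk | hkn
      · simp [Nat.sub_eq_zero_of_le hnk]
      · obtain ⟨a, rfl⟩ := Nat.exists_eq_add_of_le hkn
        obtain ⟨b, rfl⟩ := Nat.exists_eq_add_of_le h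
        simp only [Nat.add_sub_cancel_left, show k + a + b - k = a + b by omega]
        nlinarith
    rw [descFactorial_succ, descFactorial_succ, pow_succ, pow_succ]
    calc N ^ k * N * ((n - k) * n.descFactorial k)
        = (N ^ k * n.descFactorial k) * (N * (n - k)) := by ring
      _ ≤ (n ^ k * N.descFactorial k) * (n * (N - k)) := Nat.mul_le_mul ih hstep
      _ = n ^ k * n * ((N - k) * N.descFactorial k) := by ring

lemma Nat.pow_mul_choose_le {n N : ℕ} (h : n ≤ N) (k : ℕ) :
    N ^ k * n.choose k ≤ n ^ k * N.choose k := by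
  have := Nat.pow_mul_descFactorial_le h k
  rw [descFactorial_eq_factorial_mul_choose, descFactorial_eq_factorial_mul_choose] at this
  nlinarith [k.factorial_pos]

lemma exists_family_card_inter_lt {N s k : ℕ} (hks : k ≤ s) (hsN : s ≤ N) :
    ∃ F : Finset (Finset (Fin N)), (∀ T ∈ F, #T = s) ∧
      (∀ T ∈ F, ∀ T' ∈ F, T ≠ T' → #(T ∩ T') < k) ∧ N ^ k ≤ #F * s ^ k * s.choose k := by
  obtain ⟨F, hFX, hFsep, hFcover⟩ :=
    (powersetCard s (univ : Finset (Fin N))).exists_maximal_pairwise_not_rel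
      (fun T T' => k ≤ #(T ∩ T')) (fun T hT => by simpa [(mem_powersetCard.1 hT).2] using hks)
      (fun T T' h => by rwa [inter_comm])
  have hcard (T) (hT : T ∈ F) : #T = s := (mem_powersetCard.1 (hFX hT)).2
  refine ⟨F, hcard, fun T hT T' hT' hne => not_le.1 (hFsep T hT T' hT' hne), ?_⟩
  have hcover : N.choose s ≤ #F * (s.choose k * (N - k).choose (s - k)) := by
    calc N.choose s = #(powersetCard s (univ : Finset (Fin N))) := by simp
      _ ≤ #(F.biUnion fun T => (powersetCard s univ).filter fun T' => k ≤ #(T ∩ T')) :=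
        card_le_card fun T' hT' => by
          obtain ⟨T, hT, hk⟩ := hFcover T' hT'
          exact mem_biUnion.2 ⟨T, hT, mem_filter.2 ⟨hT', hk⟩⟩
      _ ≤ _ := card_biUnion_le_card_mul _ _ _ fun T hT => by
          simpa using card_filter_le_card_inter_le (hcard T hT)
  -- `choose_mul` turns the count `C(N,s)` into `C(N,k) C(N-k,s-k) / C(s,k)`.
  have hchoose : N.choose k ≤ #F * s.choose k ^ 2 := by
    have hpos : 0 < (N - k).choose (s - k) := Nat.choose_pos (by omega)
    have := Nat.choose_mul (n := N) hks
    refine Nat.le_of_mul_le_mul_right ?_ hpos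
    nlinarith [Nat.mul_le_mul_right (s.choose k) hcover]
  have hpos : 0 < s.choose k := Nat.choose_pos hks
  refine Nat.le_of_mul_le_mul_right ?_ hpos
  nlinarith [Nat.pow_mul_choose_le hsN k, Nat.mul_le_mul_left (s ^ k) hchoose]

lemma exists_family_two_mul_card_inter_lt {N s : ℕ} (hsN : s ≤ N) :
    ∃ F : Finset (Finset (Fin N)), (∀ T ∈ F, #T = s) ∧
      (∀ T ∈ F, ∀ T' ∈ F, T ≠ T' → 2 * #(T ∩ T') < s) ∧
      N ^ ((s + 1) / 2) ≤ #F * (4 * s) ^ ((s + 1) / 2) := by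
  obtain ⟨F, hcard, hsep, hF⟩ := exists_family_card_inter_lt (k := (s + 1) / 2) (by omega) hsN
  refine ⟨F, hcard, fun T hT T' hT' hne => by have := hsep T hT T' hT' hne; omega, ?_⟩
  have hchoose : s.choose ((s + 1) / 2) ≤ 4 ^ ((s + 1) / 2) :=
    (Nat.choose_le_two_pow _ _).trans <| by
      rw [show 4 = 2 ^ 2 by rfl, ← pow_mul]; exact Nat.pow_le_pow_right two_pos (by omega)
  calc _ ≤ _ := hF
    _ ≤ #F * s ^ ((s + 1) / 2) * 4 ^ ((s + 1) / 2) := Nat.mul_le_mul_left _ hchoose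
    _ = _ := by rw [mul_pow]; ring

section Volume
open MeasureTheory Module Topology Pointwise
variable {p : ℝ} {N : ℕ}

lemma continuous_pnormPow (hp : 0 < p) : Continuous (pnormPow p : (Fin N → ℝ) → ℝ) :=
  continuous_finsetSum _ fun i _ => (continuous_apply i).abs.rpow_const fun _ => Or.inr hp.le

lemma isCompact_pnormPow_le (hp : 0 < p) (t : ℝ) :
    IsCompact {x : Fin N → ℝ | pnormPow p x ≤ t} := by
  refine Metric.isCompact_of_isClosed_isBounded (isClosed_le (continuous_pnormPow hp)
    continuous_const) (isBounded_iff_forall_norm_le.2 ⟨t ^ (1 / p), fun x hx => ?_⟩)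
  have ht : 0 ≤ t := (pnormPow_nonneg x).trans hx
  refine pi_norm_le_iff_of_nonneg (by positivity) |>.2 fun i => ?_
  have hxi : |x i| ^ p ≤ t :=
    (single_le_sum (fun j _ => Real.rpow_nonneg (abs_nonneg (x j)) p) (mem_univ i)).trans hx
  calc ‖x i‖ = (|x i| ^ p) ^ (1 / p) := by
        rw [Real.norm_eq_abs, ← Real.rpow_mul (abs_nonneg _), mul_one_div_cancel hp.ne',
          Real.rpow_one]
    _ ≤ t ^ (1 / p) := by gcongr

lemma pnormPow_le_mem_nhds_zero (hp : 0 < p) {t : ℝ} (ht : 0 < t) :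
    {x : Fin N → ℝ | pnormPow p x ≤ t} ∈ 𝓝 0 :=
  (continuous_pnormPow hp).continuousAt.preimage_mem_nhds <| Iic_mem_nhds <| by
    rwa [(pnormPow_eq_zero_iff hp).2 rfl]

lemma pnormPow_le_eq_smul (hp : 0 < p) {t : ℝ} (ht : 0 < t) :
    {x : Fin N → ℝ | pnormPow p x ≤ t} = t ^ (1 / p) • {x | pnormPow p x ≤ 1} := by
  ext x
  have hpow : ((t ^ (1 / p))⁻¹) ^ p = t⁻¹ := by
    rw [Real.inv_rpow (by positivity), ← Real.rpow_mul ht.le, one_div_mul_cancel hp.ne',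
      Real.rpow_one]
  rw [Set.mem_smul_set_iff_inv_smul_mem₀ (by positivity), Set.mem_ofPred_eq, Set.mem_ofPred_eq,
    pnormPow_smul (by positivity), hpow, inv_mul_le_one₀ ht]

variable {E : Type*} [NormedAddCommGroup E] [NormedSpace ℝ E] [FiniteDimensional ℝ E]
  [MeasurableSpace E] [BorelSpace E]

lemma addHaar_image_pnormPow_le (hp : 0 < p) (μ : Measure E) [μ.IsAddHaarMeasure]
    (B : (Fin N → ℝ) →ₗ[ℝ] E) {t : ℝ} (ht : 0 < t) :
    μ (B '' {x | pnormPow p x ≤ t}) =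
      ENNReal.ofReal (t ^ (finrank ℝ E / p)) * μ (B '' {x | pnormPow p x ≤ 1}) := by
  rw [pnormPow_le_eq_smul hp ht, image_smul_set, Measure.addHaar_smul,
    abs_of_nonneg (by positivity), ← Real.rpow_natCast, ← Real.rpow_mul ht.le, one_div_mul_eq_div]

/-- The translates `B (u i) + B '' {pnormPow p ≤ ρ}` are disjoint and lie in
`B '' {pnormPow p ≤ R + ρ}`, whose volume is `((R + ρ) / ρ) ^ (dim E / p)` times larger. -/
lemma card_le_of_image_separated (hp : 0 < p) (hp1 : p ≤ 1) (B : (Fin N → ℝ) →ₗ[ℝ] E)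
    (hB : Function.Surjective B) {ι : Type*} (F : Finset ι) (u : ι → Fin N → ℝ) {R ρ : ℝ}
    (hR : 0 ≤ R) (hρ : 0 < ρ) (hu : ∀ i ∈ F, pnormPow p (u i) ≤ R)
    (hsep : ∀ i ∈ F, ∀ j ∈ F, i ≠ j → ∀ a b : Fin N → ℝ,
      pnormPow p a ≤ ρ → pnormPow p b ≤ ρ → B (u i + a) ≠ B (u j + b)) :
    (#F : ℝ) ≤ ((R + ρ) / ρ) ^ (finrank ℝ E / p) := by
  let μ : Measure E := Measure.addHaar
  let K : ℝ → Set E := fun t => B '' {x | pnormPow p x ≤ t}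
  have hK_compact (t : ℝ) : IsCompact (K t) :=
    (isCompact_pnormPow_le hp t).image B.continuous_of_finiteDimensional
  have hK1_pos : 0 < μ (K 1) := Measure.measure_pos_of_mem_nhds μ <| by
    simpa using (B.isOpenMap_of_finiteDimensional hB).image_mem_nhds
      (pnormPow_le_mem_nhds_zero hp one_pos)
  let D : ι → Set E := fun i => (B (u i) + ·) '' K ρ
  have hD (i : ι) : D i = (-B (u i) + ·) ⁻¹' K ρ := Set.image_add_left
  have hD_disj : (F : Set ι).PairwiseDisjoint D := by
    intro i hi j hj hij
    refine Set.disjoint_left.2 ?_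
    rintro _ ⟨_, ⟨a, ha, rfl⟩, rfl⟩ ⟨_, ⟨b, hb, rfl⟩, heq⟩
    exact hsep i hi j hj hij a b ha hb (by simpa only [map_add] using heq.symm)
  have hD_sub (i : ι) (hi : i ∈ F) : D i ⊆ K (R + ρ) := by
    rintro _ ⟨_, ⟨a, ha, rfl⟩, rfl⟩
    refine ⟨u i + a, ?_, map_add B _ _⟩
    exact (pnormPow_add_le hp hp1 _ _).trans (add_le_add (hu i hi) ha)
  have hcount : (#F : ENNReal) * μ (K ρ) ≤ μ (K (R + ρ)) :=
    calc (#F : ENNReal) * μ (K ρ) = ∑ i ∈ F, μ (D i) := by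
          simp [hD, measure_preimage_add]
      _ = μ (⋃ i ∈ F, D i) := (measure_biUnion_finset hD_disj fun i _ => by
          rw [hD]; exact (hK_compact ρ).measurableSet.preimage (measurable_const_add _)).symm
      _ ≤ μ (K (R + ρ)) := measure_mono (Set.iUnion₂_subset hD_sub)
  rw [addHaar_image_pnormPow_le hp μ B (t := R + ρ) (by positivity),
    addHaar_image_pnormPow_le hp μ B hρ,
    ← mul_assoc, ENNReal.mul_le_mul_iff_left hK1_pos.ne' (hK_compact 1).measure_lt_top.ne,
    ← ENNReal.ofReal_natCast, ← ENNReal.ofReal_mul (by positivity),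
    ENNReal.ofReal_le_ofReal_iff (by positivity)] at hcount
  rw [Real.div_rpow (by positivity) hρ.le, le_div_iff₀ (by positivity)]
  exact hcount

end Volume

lemma Finset.card_symmDiff_add_two_mul_card_inter {α : Type*} [DecidableEq α]
    (T T' : Finset α) : #(T ∆ T') + 2 * #(T ∩ T') = #T + #T' := by
  rw [symmDiff, sup_eq_union, card_union_of_disjoint disjoint_sdiff_sdiff]
  have h := card_sdiff_add_card_inter T T'
  have h' := card_sdiff_add_card_inter T' T
  rw [inter_comm] at h'
  omega

namespace IsStable
variable {p C : ℝ} {m N s : ℕ} {A : Matrix (Fin m) (Fin N) ℝ} {Δ : (Fin m → ℝ) → Fin N → ℝ}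

lemma card_le_of_two_mul_card_inter_lt (h : IsStable p C s A Δ) (hp : 0 < p) (hp1 : p ≤ 1)
    (hC : 0 ≤ C) (hs : 0 < s) (F : Finset (Finset (Fin N))) (hcard : ∀ T ∈ F, #T = s)
    (hsep : ∀ T ∈ F, ∀ T' ∈ F, T ≠ T' → 2 * #(T ∩ T') < s) :
    (#F : ℝ) ≤ (3 * C + 4) ^ (m / p) := by
  set ρ : ℝ := s / (3 * (C + 1)) with hρ
  have hρ_pos : 0 < ρ := by positivity
  let B := (A.mulVecLin).rangeRestrict
  have hvol := card_le_of_image_separated hp hp1 B (LinearMap.surjective_rangeRestrict _) F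
    (fun T => (T : Set (Fin N)).indicator 1) (R := s) s.cast_nonneg hρ_pos
    (fun T hT => by rw [pnormPow_indicator hp, hcard T hT]) ?_
  · have hratio : ((s : ℝ) + ρ) / ρ = 3 * C + 4 := by
      rw [hρ]; field_simp; ring
    have hrank : Module.finrank ℝ (LinearMap.range A.mulVecLin) ≤ m :=
      (Submodule.finrank_le _).trans_eq (Module.finrank_fin_fun ℝ)
    refine hvol.trans (hratio ▸ Real.rpow_le_rpow_of_exponent_le (by linarith) ?_)
    exact div_le_div_of_nonneg_right (by exact_mod_cast hrank) hp.le
  intro T hT T' hT' hne a b ha hb hB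
  have hA : A *ᵥ (T : Set (Fin N)).indicator 1 =
      A *ᵥ ((T' : Set (Fin N)).indicator 1 + (b - a)) := by
    have := congrArg Subtype.val hB
    simp only [B, LinearMap.codRestrict_apply, Matrix.mulVecLin_apply, Matrix.mulVec_add] at this
    rw [Matrix.mulVec_add, Matrix.mulVec_sub]
    linear_combination this
  have hle := h.pnormPow_sub_le_of_mulVec_eq hp hp1 hC (isSparse_indicator (hcard T hT).le)
    (isSparse_indicator (hcard T' hT').le) hA
  have hba : pnormPow p (b - a) ≤ 2 * ρ := by
    have := pnormPow_add_le hp hp1 b (-a)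
    rw [pnormPow_neg, ← sub_eq_add_neg] at this
    linarith
  have hsymm := card_symmDiff_add_two_mul_card_inter T T'
  have hlt : (s : ℝ) < #(T ∆ T') := by
    have := hsep T hT T' hT' hne
    rw [hcard T hT, hcard T' hT'] at hsymm
    exact_mod_cast (by omega : s < #(T ∆ T'))
  rw [pnormPow_indicator_sub hp] at hle
  have : (C + 1) * (2 * ρ) = 2 * s / 3 := by rw [hρ]; field_simp
  nlinarith

lemma mul_log_le (h : IsStable p C s A Δ) (hp : 0 < p) (hp1 : p ≤ 1) (hC : 0 ≤ C)
    (hs : 0 < s) (hsN : s ≤ N) :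
    p * ((s + 1) / 2 : ℕ) * Real.log (N / (4 * s)) ≤ m * Real.log (3 * C + 4) := by
  obtain ⟨F, hcard, hsep, hF⟩ := exists_family_two_mul_card_inter_lt hsN
  have hF_le := h.card_le_of_two_mul_card_inter_lt hp hp1 hC hs F hcard hsep
  have hN : 0 < N := hs.trans_le hsN
  have hpow : ((N : ℝ) / (4 * s)) ^ ((s + 1) / 2) ≤ (3 * C + 4) ^ (m / p) := by
    refine le_trans ?_ hF_le
    rw [div_pow, div_le_iff₀ (by positivity)]
    exact_mod_cast hF
  have hlog := Real.log_le_log (by positivity) hpow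
  rw [Real.log_pow, Real.log_rpow (by positivity)] at hlog
  calc p * ((s + 1) / 2 : ℕ) * Real.log (N / (4 * s))
      = p * (((s + 1) / 2 : ℕ) * Real.log (N / (4 * s))) := by ring
    _ ≤ p * (m / p * Real.log (3 * C + 4)) := by gcongr
    _ = m * Real.log (3 * C + 4) := by field_simp

end IsStable

lemma mul_log_exp_mul_le {p s k m L x : ℝ} (hp : 0 < p) (hp1 : p ≤ 1) (hs : 0 ≤ s)
    (hL : 1 ≤ L) (hx : 1 ≤ x) (hsm : s ≤ m) (hsk : s ≤ 2 * k)
    (hkey : p * k * Real.log (x / 4) ≤ m * L) :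
    1 / (20 * L) * p * s * Real.log (Real.exp 1 * x) ≤ m := by
  have ht : 0 ≤ Real.log x := Real.log_nonneg hx
  rw [Real.log_mul (Real.exp_pos 1).ne' (by positivity), Real.log_exp,
    show 1 / (20 * L) * p * s * (1 + Real.log x) = p * s * (1 + Real.log x) / (20 * L) by ring,
    div_le_iff₀ (by positivity)]
  rcases le_or_gt (Real.log x) 9 with hsmall | hlarge
  · have : p * (1 + Real.log x) ≤ 10 := by nlinarith
    nlinarith
  · rw [Real.log_div (by positivity) (by norm_num)] at hkey
    have hlog4 : Real.log 4 < 1.4 := by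
      rw [show (4 : ℝ) = 2 ^ 2 by norm_num, Real.log_pow]
      linarith [Real.log_two_lt_d9]
    have : s * (1 + Real.log x) ≤ 20 * k * (Real.log x - Real.log 4) := by nlinarith
    nlinarith

/-- If a pair `(A, Δ)` is `ℓ_p`-stable in the sense that
`‖x - Δ(Ax)‖_p^p ≤ C σ_s(x)_p^p` for all `x`, then `m ≥ C' p s ln(eN/s)`
for a constant `C' > 0` depending only on `C`. -/
theorem stable_recovery_lower_bound (C : ℝ) (hC : 0 < C) :
    ∃ C' : ℝ, 0 < C' ∧ ∀ p : ℝ, 0 < p → p ≤ 1 →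
      ∀ N m s : ℕ, m < N → s < N →
        ∀ (A : Matrix (Fin m) (Fin N) ℝ) (Δ : (Fin m → ℝ) → (Fin N → ℝ)),
          (∀ x : Fin N → ℝ,
            pnorm p (x - Δ (Matrix.mulVec A x)) ^ p ≤ C * bestApprox s p x ^ p) →
          C' * p * s * Real.log (Real.exp 1 * N / s) ≤ m := by
  have hL : 1 ≤ Real.log (3 * C + 4) := by
    rw [Real.le_log_iff_exp_le (by linarith)]
    linarith [Real.exp_one_lt_d9]
  refine ⟨1 / (20 * Real.log (3 * C + 4)), by positivity, ?_⟩
  intro p hp hp1 N m s _ hsN A Δ h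
  rcases s.eq_zero_or_pos with rfl | hs
  · simp
  have hsm : s ≤ m := le_of_mulVec_injOn_sparse hsN.le fun z z' =>
    IsStable.mulVec_injOn_sparse h hp hp1 hC.le
  have hkey := IsStable.mul_log_le h hp hp1 hC.le hs hsN.le
  rw [mul_comm 4, ← div_div] at hkey
  rw [mul_div_assoc]
  exact mul_log_exp_mul_le hp hp1 (Nat.cast_nonneg s) hL
    ((one_le_div (by positivity)).2 (by exact_mod_cast hsN.le)) (by exact_mod_cast hsm)
    (by norm_cast; omega) hkey
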